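/- Define g(r) = 4λ∫₀^{π/2} r⁴/(r² − sin²θ)^{3/2} dθ for r > 1 and λ > 0. Then g''(r) = 4λ r² ∫₀^{π/2} (3r² sin²θ + 12 sin⁴θ)/(r² − sin²θ)^{7/2} dθ > 0; i.e., g is strictly convex on (1, ∞). -/

import Mathlib

open Real Set Filter

/-- `g r = r³ V'(r)`, where `V` is the in-plane potential of the homogeneous unit circle
with density `lam`, outside the circle. -/
noncomputable def g (lam r : ℝ) : ℝ :=
  4 * lam * ∫ θ in (0:ℝ)..(π/2), r ^ 4 / (Real.sqrt (r ^ 2 - Real.sin θ ^ 2)) ^ 3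

/-! For `r > 1` the integrand `r⁴ (r² - sin² θ)^(-3/2)` stays away from its singularity, so on a
compact neighbourhood of `r` it is smooth in `r` with derivatives bounded uniformly in `θ`, and we
may differentiate twice under the integral sign. The second derivative of the integrand is
`r² (3 r² sin² θ + 12 sin⁴ θ) (r² - sin² θ)^(-7/2)`, which is positive for `θ ∈ (0, π/2)`. -/

open Function Metric

theorem hasDerivAt_intervalIntegral_of_continuousOn {F F' : ℝ → ℝ → ℝ} {U : Set ℝ} {a b x₀ : ℝ}
    (hU : IsOpen U) (hx₀ : x₀ ∈ U)
    (hF : ContinuousOn (uncurry F) (U ×ˢ uIcc a b))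
    (hF' : ContinuousOn (uncurry F') (U ×ˢ uIcc a b))
    (hderiv : ∀ x ∈ U, ∀ t ∈ uIcc a b, HasDerivAt (F · t) (F' x t) x) :
    HasDerivAt (fun x => ∫ t in a..b, F x t) (∫ t in a..b, F' x₀ t) x₀ := by
  obtain ⟨ε, hε, hεU⟩ := nhds_basis_closedBall.mem_iff.1 (hU.mem_nhds hx₀)
  have hballU : ball x₀ ε ⊆ U := ball_subset_closedBall.trans hεU
  obtain ⟨C, hC⟩ := ((isCompact_closedBall x₀ ε).prod isCompact_uIcc).exists_bound_of_continuousOn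
    (hF'.mono (prod_mono hεU le_rfl))
  have hslice {G : ℝ → ℝ → ℝ} (hG : ContinuousOn (uncurry G) (U ×ˢ uIcc a b)) {x : ℝ}
      (hx : x ∈ U) : MeasureTheory.AEStronglyMeasurable (G x)
        (MeasureTheory.volume.restrict (uIoc a b)) :=
    ((hG.uncurry_left x hx).aestronglyMeasurable measurableSet_uIcc).mono_measure
      (MeasureTheory.Measure.restrict_mono uIoc_subset_uIcc le_rfl)
  refine (intervalIntegral.hasDerivAt_integral_of_dominated_loc_of_deriv_le (ball_mem_nhds x₀ hε)
    (eventually_of_mem (hU.mem_nhds hx₀) fun x hx => hslice hF hx)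
    ((hF.uncurry_left x₀ hx₀).intervalIntegrable) (hslice hF' hx₀)
    (bound := fun _ => C) ?_ intervalIntegrable_const ?_).2
  · exact .of_forall fun t ht x hx =>
      hC (x, t) ⟨ball_subset_closedBall hx, uIoc_subset_uIcc ht⟩
  · exact .of_forall fun t ht x hx => hderiv x (hballU hx) t (uIoc_subset_uIcc ht)

lemma hasDerivAt_sqrt_sq_sub_sq {x s : ℝ} (h : s ^ 2 < x ^ 2) :
    HasDerivAt (fun y : ℝ => √(y ^ 2 - s ^ 2)) (x / √(x ^ 2 - s ^ 2)) x := by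
  convert ((hasDerivAt_pow 2 x).sub_const (s ^ 2)).sqrt (sub_pos.2 h).ne' using 1
  simp [field]

lemma hasDerivAt_pow_four_div_sqrt_pow_three {x s : ℝ} (h : s ^ 2 < x ^ 2) :
    HasDerivAt (fun y : ℝ => y ^ 4 / √(y ^ 2 - s ^ 2) ^ 3)
      (x ^ 3 * (x ^ 2 - 4 * s ^ 2) / √(x ^ 2 - s ^ 2) ^ 5) x := by
  have hu : 0 < x ^ 2 - s ^ 2 := by linarith
  have hsqrt := hasDerivAt_sqrt_sq_sub_sq h
  have : 0 < √(x ^ 2 - s ^ 2) := Real.sqrt_pos.2 hu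
  refine ((hasDerivAt_pow 4 x).div (hsqrt.fun_pow 3) (by positivity)).congr_deriv ?_
  have h2 : √(x ^ 2 - s ^ 2) ^ 2 = x ^ 2 - s ^ 2 := sq_sqrt hu.le
  field_simp
  linear_combination 4 * x ^ 3 * √(x ^ 2 - s ^ 2) ^ 2 * h2

lemma hasDerivAt_pow_three_mul_div_sqrt_pow_five {x s : ℝ} (h : s ^ 2 < x ^ 2) :
    HasDerivAt (fun y : ℝ => y ^ 3 * (y ^ 2 - 4 * s ^ 2) / √(y ^ 2 - s ^ 2) ^ 5)
      (x ^ 2 * ((3 * x ^ 2 * s ^ 2 + 12 * s ^ 4) / √(x ^ 2 - s ^ 2) ^ 7)) x := by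
  have hu : 0 < x ^ 2 - s ^ 2 := by linarith
  have hsqrt := hasDerivAt_sqrt_sq_sub_sq h
  have hnum : HasDerivAt (fun y : ℝ => y ^ 3 * (y ^ 2 - 4 * s ^ 2))
      (3 * x ^ 2 * (x ^ 2 - 4 * s ^ 2) + x ^ 3 * (2 * x)) x := by
    simpa using (hasDerivAt_pow 3 x).fun_mul ((hasDerivAt_pow 2 x).sub_const (4 * s ^ 2))
  have : 0 < √(x ^ 2 - s ^ 2) := Real.sqrt_pos.2 hu
  refine (hnum.div (hsqrt.fun_pow 5) (by positivity)).congr_deriv ?_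
  have h2 : √(x ^ 2 - s ^ 2) ^ 2 = x ^ 2 - s ^ 2 := sq_sqrt hu.le
  field_simp
  linear_combination x ^ 2 * (5 * x ^ 2 - 12 * s ^ 2) * √(x ^ 2 - s ^ 2) ^ 4 * h2

lemma sin_sq_lt_sq {x : ℝ} (hx : 1 < x) (θ : ℝ) : sin θ ^ 2 < x ^ 2 := by
  nlinarith [sin_sq_le_one θ]

lemma sqrt_sq_sub_sin_sq_pos {x : ℝ} (hx : 1 < x) (θ : ℝ) : 0 < √(x ^ 2 - sin θ ^ 2) :=
  Real.sqrt_pos.2 (sub_pos.2 (sin_sq_lt_sq hx θ))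

lemma continuousOn_div_sqrt_sq_sub_sin_sq_pow {N : ℝ × ℝ → ℝ} (hN : Continuous N)
    (n : ℕ) (T : Set ℝ) :
    ContinuousOn (fun p => N p / √(p.1 ^ 2 - sin p.2 ^ 2) ^ n) (Ioi 1 ×ˢ T) :=
  hN.continuousOn.div (by fun_prop) fun p hp =>
    (pow_pos (sqrt_sq_sub_sin_sq_pos hp.1 p.2) n).ne'

lemma hasDerivAt_g {lam r : ℝ} (hr : 1 < r) :
    HasDerivAt (g lam)
      (4 * lam * ∫ θ in (0:ℝ)..(π/2), r ^ 3 * (r ^ 2 - 4 * sin θ ^ 2) / √(r ^ 2 - sin θ ^ 2) ^ 5)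
      r :=
  (hasDerivAt_intervalIntegral_of_continuousOn isOpen_Ioi hr
    (continuousOn_div_sqrt_sq_sub_sin_sq_pow (by fun_prop) 3 _)
    (continuousOn_div_sqrt_sq_sub_sin_sq_pow (by fun_prop) 5 _)
    fun _ hx θ _ => hasDerivAt_pow_four_div_sqrt_pow_three (sin_sq_lt_sq hx θ)).const_mul (4 * lam)

lemma hasDerivAt_deriv_g {lam r : ℝ} (hr : 1 < r) :
    HasDerivAt (deriv (g lam))
      (4 * lam * r ^ 2 * ∫ θ in (0:ℝ)..(π/2),
        (3 * r ^ 2 * sin θ ^ 2 + 12 * sin θ ^ 4) / √(r ^ 2 - sin θ ^ 2) ^ 7) r := by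
  have hderiv : HasDerivAt (fun x => 4 * lam * ∫ θ in (0:ℝ)..(π/2),
        x ^ 3 * (x ^ 2 - 4 * sin θ ^ 2) / √(x ^ 2 - sin θ ^ 2) ^ 5)
      (4 * lam * ∫ θ in (0:ℝ)..(π/2),
        r ^ 2 * ((3 * r ^ 2 * sin θ ^ 2 + 12 * sin θ ^ 4) / √(r ^ 2 - sin θ ^ 2) ^ 7)) r := by
    refine (hasDerivAt_intervalIntegral_of_continuousOn isOpen_Ioi hr
      (continuousOn_div_sqrt_sq_sub_sin_sq_pow (by fun_prop) 5 _) ?_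
      fun _ hx θ _ => hasDerivAt_pow_three_mul_div_sqrt_pow_five (sin_sq_lt_sq hx θ)).const_mul
      (4 * lam)
    exact (continuous_fst.pow 2).continuousOn.mul
      (continuousOn_div_sqrt_sq_sub_sin_sq_pow (by fun_prop) 7 _)
  rw [intervalIntegral.integral_const_mul, ← mul_assoc] at hderiv
  exact hderiv.congr_of_eventuallyEq <|
    eventually_of_mem (Ioi_mem_nhds hr) fun x hx => (hasDerivAt_g hx).deriv

lemma integral_sin_sq_div_sqrt_pow_seven_pos {r : ℝ} (hr : 1 < r) :
    0 < ∫ θ in (0:ℝ)..(π/2),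
      (3 * r ^ 2 * sin θ ^ 2 + 12 * sin θ ^ 4) / √(r ^ 2 - sin θ ^ 2) ^ 7 := by
  refine intervalIntegral.intervalIntegral_pos_of_pos_on ?_ (fun θ hθ => ?_) (by positivity)
  · exact (Continuous.continuousOn (by fun_prop)).div (by fun_prop)
      (fun θ _ => (pow_pos (sqrt_sq_sub_sin_sq_pos hr θ) 7).ne') |>.intervalIntegrable
  · have : 0 < sin θ := sin_pos_of_pos_of_lt_pi hθ.1 (by linarith [hθ.2, pi_pos])
    have := sqrt_sq_sub_sin_sq_pos hr θ
    positivity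

theorem g_strictConvex (lam : ℝ) (hlam : 0 < lam) :
    StrictConvexOn ℝ (Set.Ioi 1) (g lam) ∧
    ∀ r ∈ Set.Ioi (1:ℝ),
      HasDerivAt (deriv (g lam))
        (4 * lam * r ^ 2 * ∫ θ in (0:ℝ)..(π/2),
          (3 * r ^ 2 * Real.sin θ ^ 2 + 12 * Real.sin θ ^ 4) /
            (Real.sqrt (r ^ 2 - Real.sin θ ^ 2)) ^ 7) r ∧
      0 < 4 * lam * r ^ 2 * ∫ θ in (0:ℝ)..(π/2),
          (3 * r ^ 2 * Real.sin θ ^ 2 + 12 * Real.sin θ ^ 4) /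
            (Real.sqrt (r ^ 2 - Real.sin θ ^ 2)) ^ 7 := by
  have hpos (r : ℝ) (hr : 1 < r) : 0 < 4 * lam * r ^ 2 * ∫ θ in (0:ℝ)..(π/2),
      (3 * r ^ 2 * sin θ ^ 2 + 12 * sin θ ^ 4) / √(r ^ 2 - sin θ ^ 2) ^ 7 := by
    have := integral_sin_sq_div_sqrt_pow_seven_pos hr
    have : 0 < r := by linarith
    positivity
  refine ⟨strictConvexOn_of_deriv2_pos' (convex_Ioi 1) ?_ fun r hr => ?_,
    fun r hr => ⟨hasDerivAt_deriv_g hr, hpos r hr⟩⟩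
  · exact fun x hx => (hasDerivAt_g hx).continuousAt.continuousWithinAt
  · rw [Function.iterate_succ_apply, Function.iterate_one, (hasDerivAt_deriv_g hr).deriv]
    exact hpos r hr
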